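/- arXiv:1401.0936 — 3 statements merged into one kernel-verified Lean document; each statement's English description precedes it below -/
import Mathlib

section
/- Let T be a string of length n−1 over an alphabet and let ℓ_i denote, for each starting position i, the length of the longest common prefix between the suffix T[i..n−1] and any lexicographically smaller suffix of T. Then ℓ_i ≥ ℓ_{i−1} − 1 for all i ≥ 2, i.e., ℓ_{i−1} ≤ ℓ_i + 1. -/
/-- Length of the longest common prefix of two lists. -/
def lcpLen {α : Type*} [DecidableEq α] : List α → List α → ℕ
  | a :: as, b :: bs => if a = b then lcpLen as bs + 1 else 0
  | _, _ => 0

/-!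
If the suffix at `i - 1` shares a nonempty prefix with a smaller suffix at `j`, the two start
with the same letter.  Dropping it leaves the suffix at `j + 1`, which is still smaller than the
suffix at `i` and shares exactly one letter less with it.
-/

section Lcp

variable {α : Type*} [DecidableEq α]

@[simp]
theorem lcpLen_nil_right (x : List α) : lcpLen x [] = 0 := by
  cases x <;> rfl

theorem lcpLen_cons_le (a : α) (x y : List α) : lcpLen (a :: x) y ≤ lcpLen x y.tail + 1 := by
  cases y with
  | nil => simp
  | cons b ys => rw [lcpLen]; split_ifs <;> simp

theorem tail_lt_of_lt_cons_of_lcpLen_pos [LT α] [Std.Irrefl (α := α) (· < ·)] {a : α}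
    {x y : List α} (hlt : y < a :: x) (hpos : 0 < lcpLen (a :: x) y) : y.tail < x := by
  cases y with
  | nil => simp at hpos
  | cons b ys =>
    obtain rfl : a = b := by
      by_contra hab
      simp [lcpLen, hab] at hpos
    exact List.cons_lt_cons_self.mp hlt

end Lcp

section Plcp

variable {α : Type*} [LinearOrder α]

def plcp (T : List α) (i : ℕ) : ℕ :=
  ((Finset.range T.length).filter (fun j => T.drop j < T.drop i)).sup
    (fun j => lcpLen (T.drop i) (T.drop j))

theorem lcpLen_drop_le_plcp (T : List α) {i k : ℕ} (hk : T.drop k < T.drop i) :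
    lcpLen (T.drop i) (T.drop k) ≤ plcp T i := by
  rcases lt_or_ge k T.length with hkT | hkT
  · exact Finset.le_sup (f := fun j => lcpLen (T.drop i) (T.drop j))
      (Finset.mem_filter.2 ⟨Finset.mem_range.2 hkT, hk⟩)
  · simp [List.drop_eq_nil_of_le hkT]

theorem plcp_le_plcp_succ_add_one (T : List α) {i : ℕ} (hi : i < T.length) :
    plcp T i ≤ plcp T (i + 1) + 1 := by
  refine Finset.sup_le fun j hj => ?_
  have hlt : T.drop j < T.drop i := (Finset.mem_filter.1 hj).2
  rw [List.drop_eq_getElem_cons hi] at hlt ⊢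
  rcases Nat.eq_zero_or_pos (lcpLen (T[i] :: T.drop (i + 1)) (T.drop j)) with hzero | hpos
  · omega
  · have htail : T.drop (j + 1) < T.drop (i + 1) := by
      simpa only [List.tail_drop] using tail_lt_of_lt_cons_of_lcpLen_pos hlt hpos
    calc lcpLen (T[i] :: T.drop (i + 1)) (T.drop j)
        ≤ lcpLen (T.drop (i + 1)) (T.drop (j + 1)) + 1 := by
          simpa only [List.tail_drop] using lcpLen_cons_le T[i] (T.drop (i + 1)) (T.drop j)
      _ ≤ plcp T (i + 1) + 1 := Nat.add_le_add_right (lcpLen_drop_le_plcp T htail) 1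

end Plcp

/-- Let `ℓ i` be the length of the longest common prefix between the suffix
`T.drop i` and any lexicographically smaller suffix of `T`.  Then
`ℓ (i-1) ≤ ℓ i + 1` for all `1 ≤ i < |T|`. -/
theorem plcp_decreases_by_at_most_one {α : Type*} [LinearOrder α]
    (T : List α) (ℓ : ℕ → ℕ)
    (hℓ : ∀ i < T.length,
      ℓ i = ((Finset.range T.length).filter
          (fun j => T.drop j < T.drop i)).sup
          (fun j => lcpLen (T.drop i) (T.drop j))) :
    ∀ i, 1 ≤ i → i < T.length → ℓ (i - 1) ≤ ℓ i + 1 := by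
  intro i hi hiT
  have hpred : i - 1 < T.length := by omega
  have key := plcp_le_plcp_succ_add_one T hpred
  rw [Nat.sub_add_cancel hi] at key
  rw [hℓ i hiT, hℓ (i - 1) hpred]
  exact key
end

section
/- Sampling nodes of a rooted tree that have depth a multiple of b and height at least b−1 yields at most n/b sampled nodes, where n is the total number of nodes and b ≥ 2. -/
/-!
Charge every sampled node `b - 1` unsampled nodes below it. If the node has a sampled proper
descendant, these are the nodes strictly between it and the next sampled level; otherwise they lie
on a deepest path of its subtree, which has at least `b - 1` nodes below it by the height
condition. Both are instances of one invariant: for a subtree hanging at depth `d`, with `m < b`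
levels to go until the next depth divisible by `b`, the first `min m (height + 1)` nodes of a
deepest path are charged to nobody, so `b * #sampled + min m (height + 1) ≤ size`.
-/

/-- A rooted ordered tree. -/
inductive RTree where
  | node : List RTree → RTree

namespace RTree

/-- Total number of nodes. -/
def size : RTree → ℕ
  | node cs => 1 + (cs.attach.map (fun x => size x.1)).sum
decreasing_by
  have := List.sizeOf_lt_of_mem x.2
  simp at this ⊢
  omega

/-- Height of a node: maximum distance to a leaf in its subtree. -/
def height : RTree → ℕ
  | node cs => (cs.attach.map (fun x => height x.1 + 1)).foldr max 0
decreasing_by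
  have := List.sizeOf_lt_of_mem x.2
  simp at this ⊢
  omega

/-- Number of sampled nodes in the subtree of a node at depth `d`: a node is
sampled iff its depth is a multiple of `b` and its height is at least `b - 1`. -/
def countSampled (b : ℕ) : ℕ → RTree → ℕ
  | d, node cs =>
      (if d % b = 0 ∧ b - 1 ≤ height (node cs) then 1 else 0) +
        (cs.attach.map (fun x => countSampled b (d + 1) x.1)).sum
decreasing_by
  have := List.sizeOf_lt_of_mem x.2
  simp at this ⊢
  omega

end RTree

namespace RTree

@[elab_as_elim, induction_eliminator]
theorem induction {motive : RTree → Prop}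
    (node : ∀ cs, (∀ c ∈ cs, motive c) → motive (node cs)) (t : RTree) : motive t := by
  obtain ⟨cs⟩ := t
  exact node cs fun c hc => induction node c
decreasing_by exact List.sizeOf_lt_of_mem hc |>.trans_le (by simp)

theorem size_node (cs : List RTree) : size (node cs) = 1 + (cs.map size).sum := by
  rw [size, List.attach_map_val]

theorem height_node (cs : List RTree) :
    height (node cs) = (cs.map (height · + 1)).foldr max 0 := by
  rw [height, List.attach_map_val (l := cs) (f := (height · + 1))]

theorem countSampled_node (b d : ℕ) (cs : List RTree) :
    countSampled b d (node cs) =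
      (if d % b = 0 ∧ b - 1 ≤ height (node cs) then 1 else 0) +
        (cs.map (countSampled b (d + 1))).sum := by
  rw [countSampled, List.attach_map_val]

@[simp]
theorem height_leaf : height (node []) = 0 := by
  simp [height_node]

theorem exists_height_add_one_eq {cs : List RTree} (hcs : cs ≠ []) :
    ∃ c ∈ cs, height c + 1 = height (node cs) := by
  have hmax := List.foldr_max_of_ne_nil (l := cs.map (height · + 1)) (by simpa using hcs)
  simpa [height_node] using List.maximum_mem hmax.symm

theorem sum_map_add_min_height_le {cs : List RTree} {f g : RTree → ℕ} {m : ℕ}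
    (h : ∀ c ∈ cs, f c + min m (height c + 1) ≤ g c) :
    (cs.map f).sum + min m (height (node cs)) ≤ (cs.map g).sum := by
  obtain rfl | hcs := eq_or_ne cs []
  · simp
  obtain ⟨c, hc, hheight⟩ := exists_height_add_one_eq hcs
  calc (cs.map f).sum + min m (height (node cs))
      ≤ (cs.map f).sum + (cs.map (fun c => min m (height c + 1))).sum := by
        rw [← hheight]
        gcongr
        exact List.single_le_sum (fun _ _ => Nat.zero_le _) _ (List.mem_map_of_mem hc)
    _ ≤ (cs.map g).sum := by
        rw [← List.sum_map_add]
        exact List.sum_le_sum h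

theorem mul_countSampled_add_min_le_size {b : ℕ} (hb : 0 < b) (t : RTree) (d m : ℕ)
    (hdvd : b ∣ d + m) (hm : m < b) :
    b * countSampled b d t + min m (height t + 1) ≤ size t := by
  induction t generalizing d m with
  | node cs ih =>
  rw [countSampled_node, size_node, mul_add]
  rcases eq_or_ne m 0 with rfl | hm0
  · have hchildren := sum_map_add_min_height_le (m := b - 1) fun c hc =>
      ih c hc (d + 1) (b - 1) (by simpa [show d + 1 + (b - 1) = d + b by omega] using hdvd)
        (by omega)
    rw [List.sum_map_mul_left] at hchildren
    split_ifs <;> omega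
  · have hchildren := sum_map_add_min_height_le (m := m - 1) fun c hc =>
      ih c hc (d + 1) (m - 1) (by rwa [show d + 1 + (m - 1) = d + m by omega]) (by omega)
    rw [List.sum_map_mul_left] at hchildren
    have hd : ¬ b ∣ d := fun hd =>
      hm0 (Nat.eq_zero_of_dvd_of_lt ((Nat.dvd_add_iff_right hd).mpr hdvd) hm)
    rw [if_neg fun h => hd (Nat.dvd_of_mod_eq_zero h.1)]
    omega

end RTree

/-- Sampling the nodes of a rooted tree whose depth is a multiple of `b` and
whose height is at least `b - 1` yields at most `n / b` sampled nodes, where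
`n` is the total number of nodes and `b ≥ 2`. -/
theorem sampled_nodes_le (b : ℕ) (hb : 2 ≤ b) (t : RTree) :
    RTree.countSampled b 0 t ≤ RTree.size t / b := by
  rw [Nat.le_div_iff_mul_le (by omega), mul_comm]
  simpa using RTree.mul_countSampled_add_min_le_size (by omega) t 0 0 (dvd_zero b) (by omega)
end

section
/- If the suffix of rank r (in lexicographic order among suffixes of T) starts with a factor p of length ℓ, the suffix of rank r−1 is prefixed by the length-(ℓ−1) prefix of p but not by p itself, and p occurs in T at least twice, then the length-(ℓ−1) prefix of p is right-maximal in T (it occurs followed by at least two distinct characters). -/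
/-!
Write `p = q ++ [c]`.  Since `q` prefixes `s₁` but `p` does not, either `s₁` continues `q`
with a character `d ≠ c`, giving the two right extensions `q d` and `q c`, or `s₁ = q`.
In the latter case the suffix `q` of `T` ends with the terminator, and `q c`, occurring
inside `T`, would put a second copy of the terminator before the last position of `T`.
-/

namespace List

variable {α : Type*}

theorem IsPrefix.eq_or_exists_append_singleton_prefix {q s : List α} (h : q <+: s) :
    s = q ∨ ∃ d, q ++ [d] <+: s := by
  obtain ⟨t, rfl⟩ := h
  cases t with
  | nil => exact .inl (append_nil q)
  | cons d t => exact .inr ⟨d, t, by simp⟩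

theorem not_append_infix_of_suffix_of_count_getLast_eq_one [DecidableEq α] {T s t : List α}
    (hne : T ≠ []) (hcount : T.count (T.getLast hne) = 1) (hs : s <:+ T) (hs₀ : s ≠ [])
    (ht₀ : t ≠ []) : ¬ s ++ t <:+: T := by
  rintro ⟨u, v, rfl⟩
  have htv : t ++ v ≠ [] := by simp [ht₀]
  have hlast_s : (u ++ (s ++ t) ++ v).getLast hne ∈ s := by
    rw [← hs.getLast hs₀]; exact getLast_mem hs₀
  have hlast_tv : (u ++ (s ++ t) ++ v).getLast hne ∈ t ++ v := by
    rw [← (show t ++ v <:+ u ++ (s ++ t) ++ v from ⟨u ++ s, by simp⟩).getLast htv]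
    exact getLast_mem htv
  have h₁ := count_pos_iff.mpr hlast_s
  have h₂ := count_pos_iff.mpr hlast_tv
  simp only [append_assoc, count_append] at hcount h₁ h₂
  omega

end List

theorem right_maximal_of_adjacent_suffixes_general {α : Type*} [LinearOrder α]
    (T : List α) (dollar : α) (hne : T ≠ []) (hlast : T.getLast hne = dollar)
    (hdollar : T.count dollar = 1)
    (p : List α) (ℓ : ℕ) (hp : p.length = ℓ) (hℓ : 1 ≤ ℓ)
    (i₁ i₂ : ℕ) (h₁ : i₁ < T.length) (h₂ : i₂ < T.length)
    (s₁ s₂ : List α) (hs₁ : s₁ = T.drop i₁) (hs₂ : s₂ = T.drop i₂)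
    (hpref₂ : p <+: s₂)
    (hpref₁ : p.take (ℓ - 1) <+: s₁)
    (hnpref₁ : ¬ p <+: s₁) :
    ∃ a b : α, a ≠ b ∧
      (∃ j < T.length, p.take (ℓ - 1) ++ [a] <+: T.drop j) ∧
      (∃ j < T.length, p.take (ℓ - 1) ++ [b] <+: T.drop j) := by
  subst hlast hs₁ hs₂ hp
  have hp₀ : p ≠ [] := List.ne_nil_of_length_pos hℓ
  rw [← List.dropLast_eq_take] at hpref₁ ⊢
  have hpc : p.dropLast ++ [p.getLast hp₀] = p := List.dropLast_append_getLast hp₀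
  rcases hpref₁.eq_or_exists_append_singleton_prefix with hs₁ | ⟨d, hd⟩
  · refine absurd ?_ (List.not_append_infix_of_suffix_of_count_getLast_eq_one hne hdollar
      (List.drop_suffix i₁ T) (by simpa using h₁) (List.cons_ne_nil (p.getLast hp₀) []))
    rw [hs₁, hpc]
    exact hpref₂.isInfix.trans (List.drop_suffix i₂ T).isInfix
  · refine ⟨d, p.getLast hp₀, ?_, ⟨i₁, h₁, hd⟩, ⟨i₂, h₂, by rwa [hpc]⟩⟩
    rintro rfl
    exact hnpref₁ (by rwa [hpc] at hd)

/-- Setting: `T` is a `$`-terminated string (its last character `dollar`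
occurs exactly once, at the end); its (nonempty) suffixes are the `T.drop i`
for `i < |T|`, totally ordered lexicographically.  Hypotheses: the suffix
`s₂` (of rank `r`) starts with a factor `p` of length `ℓ ≥ 1`; the suffix
`s₁` (of rank `r − 1`, i.e. the lexicographically adjacent smaller suffix)
is prefixed by the length-`(ℓ−1)` prefix of `p` but not by `p` itself; and
`p` occurs in `T` at least twice.  Conclusion: the length-`(ℓ−1)` prefix of
`p` is right-maximal: it occurs followed by at least two distinct
characters. -/
theorem right_maximal_of_adjacent_suffixes {α : Type*} [LinearOrder α]
    (T : List α) (dollar : α) (hne : T ≠ []) (hlast : T.getLast hne = dollar)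
    (hdollar : T.count dollar = 1)
    (p : List α) (ℓ : ℕ) (hp : p.length = ℓ) (hℓ : 1 ≤ ℓ)
    (i₁ i₂ : ℕ) (h₁ : i₁ < T.length) (h₂ : i₂ < T.length)
    (s₁ s₂ : List α) (hs₁ : s₁ = T.drop i₁) (hs₂ : s₂ = T.drop i₂)
    (hlt : s₁ < s₂)
    (hadj : ∀ j < T.length, ¬ (s₁ < T.drop j ∧ T.drop j < s₂))
    (hpref₂ : p <+: s₂)
    (hpref₁ : p.take (ℓ - 1) <+: s₁)
    (hnpref₁ : ¬ p <+: s₁)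
    (htwice : ∃ j k : ℕ, j < k ∧ k < T.length ∧ p <+: T.drop j ∧ p <+: T.drop k) :
    ∃ a b : α, a ≠ b ∧
      (∃ j < T.length, p.take (ℓ - 1) ++ [a] <+: T.drop j) ∧
      (∃ j < T.length, p.take (ℓ - 1) ++ [b] <+: T.drop j) :=
  right_maximal_of_adjacent_suffixes_general T dollar hne hlast hdollar p ℓ hp hℓ i₁ i₂ h₁ h₂ s₁ s₂
    hs₁ hs₂ hpref₂ hpref₁ hnpref₁
end
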